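/- Every traceless n×n real matrix is a sum of at most n²−1 nilpotent matrices. -/

import Mathlib

/-!
Fix an index `i₀`. The diagonal of a traceless matrix `A` is `∑ᵢ Aᵢᵢ (eᵢ - eᵢ₀)`, and
`eᵢ - eᵢ₀` is the diagonal of the rank-one matrix `(eᵢ - eᵢ₀)(eᵢ + eᵢ₀)ᵀ`, which squares to zero
because `(eᵢ + eᵢ₀)ᵀ(eᵢ - eᵢ₀) = 0`. Subtracting the corresponding `n - 1` nilpotent matrices
from `A` leaves a matrix with zero diagonal, i.e. a combination of the `n² - n` off-diagonal
matrix units, each of square zero: `n² - 1` nilpotent summands in all.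
-/

namespace Matrix

variable {ι R : Type*} [DecidableEq ι]

theorem isNilpotent_vecMulVec_of_dotProduct_eq_zero [Fintype ι] [Ring R] {u v : ι → R}
    (h : v ⬝ᵥ u = 0) : IsNilpotent (vecMulVec u v) :=
  ⟨2, by rw [sq, vecMulVec_mul_vecMulVec, h, zero_smul, vecMulVec_zero]⟩

theorem isNilpotent_single_of_ne [Fintype ι] [Ring R] {i j : ι} (h : i ≠ j) (c : R) :
    IsNilpotent (single i j c) :=
  ⟨2, by simp [sq, h.symm]⟩

variable [CommRing R]

variable (R) in
/-- The block `!![1, 1; -1, -1]` on the coordinates `i, i₀` (and `0` if `i = i₀`). -/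
def nilpotentDiagDiff (i₀ i : ι) : Matrix ι ι R :=
  vecMulVec (Pi.single i 1 - Pi.single i₀ 1) (Pi.single i 1 + Pi.single i₀ 1)

theorem isNilpotent_nilpotentDiagDiff [Fintype ι] (i₀ i : ι) :
    IsNilpotent (nilpotentDiagDiff R i₀ i) := by
  refine isNilpotent_vecMulVec_of_dotProduct_eq_zero ?_
  rw [add_dotProduct, dotProduct_sub, dotProduct_sub]
  simp [Pi.single_apply, eq_comm]

@[simp]
theorem nilpotentDiagDiff_self (i₀ : ι) : nilpotentDiagDiff R i₀ i₀ = 0 := by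
  simp [nilpotentDiagDiff]

theorem nilpotentDiagDiff_apply_self (i₀ i k : ι) :
    nilpotentDiagDiff R i₀ i k k = (Pi.single i 1 - Pi.single i₀ 1 : ι → R) k := by
  simp only [nilpotentDiagDiff, vecMulVec_apply, Pi.sub_apply, Pi.add_apply, Pi.single_apply]
  split_ifs <;> simp_all

variable [Fintype ι]

theorem diag_sum_smul_nilpotentDiagDiff {A : Matrix ι ι R} (hA : A.trace = 0) (i₀ : ι) :
    (∑ i, A i i • nilpotentDiagDiff R i₀ i).diag = A.diag := by
  ext k
  simp only [diag_apply, sum_apply, smul_apply, nilpotentDiagDiff_apply_self, smul_eq_mul,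
    Pi.sub_apply, mul_sub, Finset.sum_sub_distrib, ← Finset.sum_mul]
  rw [show ∑ i, A i i = 0 from hA, zero_mul, sub_zero]
  simp [Pi.single_apply]

theorem exists_isNilpotent_sum_eq_of_trace_eq_zero {A : Matrix ι ι R} (hA : A.trace = 0)
    (i₀ : ι) :
    ∃ N : ι × ι → Matrix ι ι R, (∀ p, IsNilpotent (N p)) ∧ N (i₀, i₀) = 0 ∧ ∑ p, N p = A := by
  set D := ∑ i, A i i • nilpotentDiagDiff R i₀ i with hD
  have hdiag : ∀ i, (A - D) i i = 0 := fun i => by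
    rw [sub_apply, ← diag_apply D, diag_sum_smul_nilpotentDiagDiff hA, diag_apply, sub_self]
  refine ⟨fun p => (if p.1 = p.2 then A p.1 p.1 • nilpotentDiagDiff R i₀ p.1 else 0) +
    single p.1 p.2 ((A - D) p.1 p.2), ?_, by simp [hdiag], ?_⟩
  · rintro ⟨i, j⟩
    dsimp only
    split_ifs with h
    · rw [h, hdiag, single_zero, add_zero]
      exact (isNilpotent_nilpotentDiagDiff i₀ j).smul _
    · rw [zero_add]
      exact isNilpotent_single_of_ne h _
  · simp only [Finset.sum_add_distrib, Fintype.sum_prod_type, Finset.sum_ite_eq,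
      Finset.mem_univ, if_true, ← matrix_eq_sum_single, ← hD, add_sub_cancel]

theorem exists_fin_isNilpotent_sum_eq_of_trace_eq_zero [Nonempty ι] {A : Matrix ι ι R}
    (hA : A.trace = 0) :
    ∃ N : Fin (Fintype.card ι ^ 2 - 1) → Matrix ι ι R,
      (∀ k, IsNilpotent (N k)) ∧ A = ∑ k, N k := by
  obtain ⟨i₀⟩ := ‹Nonempty ι›
  obtain ⟨N, hN, hN₀, hNA⟩ := exists_isNilpotent_sum_eq_of_trace_eq_zero hA i₀
  have e : {p : ι × ι // p ≠ (i₀, i₀)} ≃ Fin (Fintype.card ι ^ 2 - 1) :=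
    Fintype.equivFinOfCardEq (by simp [Fintype.card_subtype_compl, sq])
  refine ⟨fun k => N (e.symm k), fun k => hN _, ?_⟩
  rw [← hNA, Fintype.sum_eq_add_sum_subtype_ne _ (i₀, i₀), hN₀, zero_add]
  exact (e.symm.sum_comp fun p => N p).symm

end Matrix

/-- Every traceless `n × n` real matrix (`n ≥ 2`) is a sum of at most `n² - 1`
nilpotent matrices. -/
theorem traceless_sum_nilpotent (n : ℕ) (hn : 2 ≤ n)
    (A : Matrix (Fin n) (Fin n) ℝ) (hA : A.trace = 0) :
    ∃ N : Fin (n ^ 2 - 1) → Matrix (Fin n) (Fin n) ℝ,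
      (∀ i, IsNilpotent (N i)) ∧ A = ∑ i, N i := by
  have : Nonempty (Fin n) := ⟨⟨0, by omega⟩⟩
  have := Matrix.exists_fin_isNilpotent_sum_eq_of_trace_eq_zero hA
  rwa [Fintype.card_fin] at this
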